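/- There exists a finite graph that is neither 123-representable nor 132-representable; in particular, the disjoint union of the star K_{1,6} and two copies of the complete graph K_4 is neither 123-representable nor 132-representable. -/

import Mathlib

/-- Two letters `x` and `y` alternate in the word `w`: between any two occurrences of `x`
there is an occurrence of `y`, and between any two occurrences of `y` there is an
occurrence of `x`. -/
def Alternates {α : Type*} (w : List α) (x y : α) : Prop :=
  (∀ i j : ℕ, i < j → w[i]? = some x → w[j]? = some x →
      ∃ k : ℕ, i < k ∧ k < j ∧ w[k]? = some y) ∧
  (∀ i j : ℕ, i < j → w[i]? = some y → w[j]? = some y →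
      ∃ k : ℕ, i < k ∧ k < j ∧ w[k]? = some x)

/-- A word `w` over the vertex set of `G` represents `G`: every vertex occurs in `w`, and
two distinct vertices alternate in `w` iff they are adjacent in `G`. -/
def Represents {α : Type*} (G : SimpleGraph α) (w : List α) : Prop :=
  (∀ v : α, v ∈ w) ∧ ∀ x y : α, x ≠ y → (Alternates w x y ↔ G.Adj x y)

/-- A word `w` over the labels represents `G` via the (injective) labeling `f` of the
vertices: every letter of `w` is the label of a vertex, every vertex's label occurs in `w`,
and the labels of two distinct vertices alternate in `w` iff the vertices are adjacent. -/
def RepresentsLab {V L : Type*} (G : SimpleGraph V) (f : V → L) (w : List L) : Prop :=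
  (∀ l ∈ w, ∃ v : V, f v = l) ∧ (∀ v : V, f v ∈ w) ∧
  ∀ x y : V, x ≠ y → (Alternates w (f x) (f y) ↔ G.Adj x y)

/-- `w` avoids the pattern 123: it has no strictly increasing subsequence of length 3. -/
def Avoids123 {α : Type*} [LinearOrder α] (w : List α) : Prop :=
  ¬ ∃ (i j k : ℕ) (a b c : α), i < j ∧ j < k ∧
    w[i]? = some a ∧ w[j]? = some b ∧ w[k]? = some c ∧ a < b ∧ b < c

/-- `w` avoids the pattern 132: there are no indices `i < j < k` with `w_i < w_k < w_j`. -/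
def Avoids132 {α : Type*} [LinearOrder α] (w : List α) : Prop :=
  ¬ ∃ (i j k : ℕ) (a b c : α), i < j ∧ j < k ∧
    w[i]? = some a ∧ w[j]? = some b ∧ w[k]? = some c ∧ a < c ∧ c < b

/-- `w` is 2-uniform: every letter occurring in `w` occurs exactly twice. -/
def TwoUniform {α : Type*} (w : List α) : Prop :=
  ∀ x ∈ w, ∃ i j : ℕ, i ≠ j ∧ w[i]? = some x ∧ w[j]? = some x ∧
    ∀ k : ℕ, w[k]? = some x → k = i ∨ k = j

/-- `s` and `τ` are order-isomorphic words: same length and entries in corresponding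
positions compare the same way. -/
def OrderIsoWords {α β : Type*} [LinearOrder α] [LinearOrder β]
    (s : List α) (τ : List β) : Prop :=
  s.length = τ.length ∧
  ∀ (i j : ℕ) (a b : α) (c d : β),
    s[i]? = some a → s[j]? = some b → τ[i]? = some c → τ[j]? = some d →
    (a < b ↔ c < d)

/-- `w` contains the pattern `τ`: some subsequence of `w` is order-isomorphic to `τ`. -/
def ContainsPattern {α β : Type*} [LinearOrder α] [LinearOrder β]
    (w : List α) (τ : List β) : Prop :=
  ∃ s : List α, s.Sublist w ∧ OrderIsoWords s τ

/-- `G` is 123-representable: after relabeling the vertices injectively by elements of some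
linearly ordered set, `G` is represented by a 123-avoiding word. -/
def Rep123 {V : Type*} (G : SimpleGraph V) : Prop :=
  ∃ (L : Type) (inst : LinearOrder L) (f : V → L), Function.Injective f ∧
    ∃ w : List L, @Avoids123 L inst w ∧ RepresentsLab G f w

/-- `G` is 132-representable: after relabeling the vertices injectively by elements of some
linearly ordered set, `G` is represented by a 132-avoiding word. -/
def Rep132 {V : Type*} (G : SimpleGraph V) : Prop :=
  ∃ (L : Type) (inst : LinearOrder L) (f : V → L), Function.Injective f ∧
    ∃ w : List L, @Avoids132 L inst w ∧ RepresentsLab G f w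

/-- The disjoint union of the star `K_{1,6}` and two copies of the complete graph `K_4`. -/
def starPlusTwoK4 : SimpleGraph ((Fin 1 ⊕ Fin 6) ⊕ (Fin 4 ⊕ Fin 4)) :=
  completeBipartiteGraph (Fin 1) (Fin 6) ⊕g
    ((⊤ : SimpleGraph (Fin 4)) ⊕g (⊤ : SimpleGraph (Fin 4)))

/-!
Everything happens on the labels of an induced copy of `K_{1,6}` (for 123) or of `K_4 ⊔ K_4`
(for 132) in the represented graph.

Two letters occurring at most once each always alternate, so in one of the two copies of
`K_4` every label occurs at least twice. If these labels are `a < b < c < d`, alternation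
makes their first two occurrences interleave, and then either (first `b`, first `d`,
second `c`) or (first `a`, second `d`, second `b`) is an occurrence of 132.

For the star, sort the leaves by label, with ranks `0, …, 5`. If the center occurs three
times, both gaps between its occurrences contain every leaf, which gives a 123 at once. If it
occurs once, all but at most one leaf occur exactly twice, on both sides of the center, and
non-alternation makes these pairs nested; four of them contain a 123. If it occurs exactly
twice, every leaf occurs once between the two centers, in decreasing order, and two such
leaves fail to alternate only through an extra occurrence of the larger one before the centers
or of the smaller one after them. A leaf of rank `1, …, 4` cannot occur on both sides, as it
would have to lie both above and below the center; and if two overlapping neighbouring pairs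
use the same side, their extra occurrences form an ascent that leaf `5` or leaf `0` completes
to a 123. So the pairs of ranks `(1, 2)`, `(2, 3)`, `(3, 4)` cannot all fail to alternate.
-/

open Function SimpleGraph

section Occurrences

variable {α : Type*} {w : List α} {x y c : α} {i j : ℕ}

lemma ne_of_getElem?_eq_some (hi : w[i]? = some x) (hj : w[j]? = some y) (hxy : x ≠ y) :
    i ≠ j := by
  rintro rfl
  exact hxy (Option.some.inj (hi.symm.trans hj))

def OccursTwice (w : List α) (x : α) : Prop :=
  ∃ i j : ℕ, i < j ∧ w[i]? = some x ∧ w[j]? = some x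

lemma alternates_of_not_occursTwice (hx : ¬OccursTwice w x) (hy : ¬OccursTwice w y) :
    Alternates w x y :=
  ⟨fun i j hij hi hj => (hx ⟨i, j, hij, hi, hj⟩).elim,
    fun i j hij hi hj => (hy ⟨i, j, hij, hi, hj⟩).elim⟩

lemma Alternates.symm (h : Alternates w x y) : Alternates w y x := ⟨h.2, h.1⟩

lemma Alternates.eq_of_not_between (h : Alternates w c x) (hi : w[i]? = some x)
    (hj : w[j]? = some x) (hc : ∀ m, w[m]? = some c → m < min i j ∨ max i j < m) : i = j := by
  by_contra hij
  rcases Nat.lt_or_gt_of_ne hij with hlt | hlt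
  · obtain ⟨m, him, hmj, hm⟩ := h.2 i j hlt hi hj
    have := hc m hm
    omega
  · obtain ⟨m, hjm, hmi, hm⟩ := h.2 j i hlt hj hi
    have := hc m hm
    omega

def IsFirstTwoOcc (w : List α) (x : α) (f s : ℕ) : Prop :=
  f < s ∧ w[f]? = some x ∧ w[s]? = some x ∧ ∀ k, w[k]? = some x → k = f ∨ s ≤ k

lemma OccursTwice.exists_isFirstTwoOcc (h : OccursTwice w x) :
    ∃ f s, IsFirstTwoOcc w x f s := by
  classical
  obtain ⟨i, j, hij, hi, hj⟩ := h
  have hfst : ∃ k, w[k]? = some x := ⟨i, hi⟩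
  have hsnd : ∃ k, Nat.find hfst < k ∧ w[k]? = some x :=
    ⟨j, (Nat.find_min' hfst hi).trans_lt hij, hj⟩
  refine ⟨Nat.find hfst, Nat.find hsnd, (Nat.find_spec hsnd).1, Nat.find_spec hfst,
    (Nat.find_spec hsnd).2, fun k hk => ?_⟩
  rcases (Nat.find_min' hfst hk).eq_or_lt with heq | hlt
  · exact .inl heq.symm
  · exact .inr (Nat.find_min' hsnd ⟨hlt, hk⟩)

variable {fx sx fy sy : ℕ}

lemma Alternates.interleave (h : Alternates w x y) (hx : IsFirstTwoOcc w x fx sx)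
    (hy : IsFirstTwoOcc w y fy sy) (hlt : fx < fy) : fy < sx ∧ sx < sy := by
  obtain ⟨k, hxk, hks, hk⟩ := h.1 fx sx hx.1 hx.2.1 hx.2.2.1
  obtain ⟨m, hym, hms, hm⟩ := h.2 fy sy hy.1 hy.2.1 hy.2.2.1
  have := hy.2.2.2 k hk
  have := hx.2.2.2 m hm
  omega

lemma Alternates.first_lt_second (h : Alternates w x y) (hxy : x ≠ y)
    (hx : IsFirstTwoOcc w x fx sx) (hy : IsFirstTwoOcc w y fy sy) : fx < sy := by
  rcases lt_trichotomy fx fy with hlt | heq | hgt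
  · exact hlt.trans hy.1
  · exact absurd heq (ne_of_getElem?_eq_some hx.2.1 hy.2.1 hxy)
  · exact (h.symm.interleave hy hx hgt).1

variable {a b : α} {p q s t x0 x1 x2 ga gb : ℕ}

lemma Alternates.straddle_of_center_once (h : Alternates w c a)
    (hcc : ∀ m, w[m]? = some c → m = x0) (hi : w[i]? = some a) (hj : w[j]? = some a)
    (hij : i < j) : i < x0 ∧ x0 < j := by
  obtain ⟨m, him, hmj, hm⟩ := h.2 i j hij hi hj
  obtain rfl := hcc m hm
  exact ⟨him, hmj⟩

lemma nested_of_center_once (hcc : ∀ m, w[m]? = some c → m = x0) (ha : Alternates w c a)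
    (hb : Alternates w c b) (hab : a ≠ b) (hnab : ¬Alternates w a b)
    (hp : p < x0) (hs : x0 < s) (hq : q < x0) (ht : x0 < t)
    (hpa : w[p]? = some a) (hsa : w[s]? = some a) (hqb : w[q]? = some b)
    (htb : w[t]? = some b) (hpq : p < q) : t < s := by
  have hst : s ≠ t := ne_of_getElem?_eq_some hsa htb hab
  by_contra! hts
  refine hnab ⟨fun i j hij hi hj => ?_, fun i j hij hi hj => ?_⟩
  · obtain ⟨hix, hxj⟩ := ha.straddle_of_center_once hcc hi hj hij
    have hip : i = p := ha.eq_of_not_between hi hpa fun m hm => by have := hcc m hm; omega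
    have hjs : j = s := ha.eq_of_not_between hj hsa fun m hm => by have := hcc m hm; omega
    exact ⟨q, by omega, by omega, hqb⟩
  · obtain ⟨hix, hxj⟩ := hb.straddle_of_center_once hcc hi hj hij
    have hiq : i = q := hb.eq_of_not_between hi hqb fun m hm => by have := hcc m hm; omega
    have hjt : j = t := hb.eq_of_not_between hj htb fun m hm => by have := hcc m hm; omega
    exact ⟨s, by omega, by omega, hsa⟩

lemma pre_or_post_of_not_alternates (hx1 : w[x1]? = some c) (hx2 : w[x2]? = some c)
    (hcc : ∀ m, w[m]? = some c → m = x1 ∨ m = x2) (ha : Alternates w c a)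
    (hb : Alternates w c b) (hac : a ≠ c) (hbc : b ≠ c) (hab : a ≠ b) (hnab : ¬Alternates w a b)
    (hga : w[ga]? = some a) (hgb : w[gb]? = some b) (h1 : x1 < ga) (hlt : ga < gb)
    (h2 : gb < x2) :
    (∃ p < x1, w[p]? = some a ∧ ∀ p' < x1, w[p']? = some b → p' < p) ∨
      (∃ q, x2 < q ∧ w[q]? = some b ∧ ∀ q', x2 < q' → w[q']? = some a → q < q') := by
  have gap_eq {e : α} {g k : ℕ} (he : Alternates w c e) (hg : w[g]? = some e)
      (hk : w[k]? = some e) (hg1 : x1 < g) (hg2 : g < x2) (hk1 : x1 < k) (hk2 : k < x2) :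
      k = g :=
    he.eq_of_not_between hk hg fun m hm => by rcases hcc m hm with rfl | rfl <;> omega
  rw [Alternates, not_and_or] at hnab
  push Not at hnab
  rcases hnab with ⟨i, j, hij, hi, hj, hno⟩ | ⟨i, j, hij, hi, hj, hno⟩
  · obtain ⟨m, him, hmj, hm⟩ := ha.2 i j hij hi hj
    rcases hcc m hm with rfl | rfl
    · refine .inl ⟨i, him, hi, fun p' hp' hp'b => ?_⟩
      have hp'i := ne_of_getElem?_eq_some hp'b hi hab.symm
      by_contra! hip'
      exact hno p' (by omega) (by omega) hp'b
    · refine absurd hgb (hno gb ?_ (by omega))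
      rcases Nat.lt_or_gt_of_ne (ne_of_getElem?_eq_some hi hx1 hac) with hi1 | hi1
      · omega
      · have := gap_eq ha hga hi h1 (by omega) hi1 him
        omega
  · obtain ⟨m, him, hmj, hm⟩ := hb.2 i j hij hi hj
    rcases hcc m hm with rfl | rfl
    · refine absurd hga (hno ga (by omega) ?_)
      rcases Nat.lt_or_gt_of_ne (ne_of_getElem?_eq_some hj hx2 hbc) with hj2 | hj2
      · have := gap_eq hb hgb hj (by omega) h2 hmj hj2
        omega
      · omega
    · refine .inr ⟨j, hmj, hj, fun q' hq' hq'a => ?_⟩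
      have hq'j := ne_of_getElem?_eq_some hq'a hj hab
      by_contra! hq'j'
      exact hno q' (by omega) (by omega) hq'a

end Occurrences

section PatternAvoidance

variable {L : Type*} [LinearOrder L] {w : List L} {a b c d : L} {l : Fin 6 → L}
  {p q x0 x1 x2 x3 ga gb : ℕ}

lemma strictMono_comp_sort {n : ℕ} {e : Fin n → L} (he : Injective e) :
    StrictMono (e ∘ Tuple.sort e) :=
  (Tuple.monotone_sort e).strictMono_of_injective (he.comp (Tuple.sort e).injective)

theorem Avoids132.false_of_four_alternating (hav : Avoids132 w) {e : Fin 4 → L}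
    (he : StrictMono e) (htwice : ∀ k, OccursTwice w (e k))
    (halt : Pairwise fun k k' => Alternates w (e k) (e k')) : False := by
  choose f s hfs using fun k => (htwice k).exists_isFirstTwoOcc
  have hne : ∀ {k k' : Fin 4}, k ≠ k' → e k ≠ e k' := he.injective.ne
  rcases lt_trichotomy (f 1) (f 3) with h13 | h13 | h31
  · exact hav ⟨f 1, f 3, s 2, e 1, e 3, e 2, h13,
      (halt (by decide)).first_lt_second (hne (by decide)) (hfs 3) (hfs 2),
      (hfs 1).2.1, (hfs 3).2.1, (hfs 2).2.2.1, he (by decide), he (by decide)⟩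
  · exact ne_of_getElem?_eq_some (hfs 1).2.1 (hfs 3).2.1 (hne (by decide)) h13
  · exact hav ⟨f 0, s 3, s 1, e 0, e 3, e 1,
      (halt (by decide)).first_lt_second (hne (by decide)) (hfs 0) (hfs 3),
      ((halt (by decide)).interleave (hfs 3) (hfs 1) h31).2,
      (hfs 0).2.1, (hfs 3).2.2.1, (hfs 1).2.2.1, he (by decide), he (by decide)⟩

theorem Avoids123.false_of_three_centers (hav : Avoids123 w) (hab : a < b) (hbd : b < d)
    (hbc : b ≠ c) (ha : Alternates w c a) (hb : Alternates w c b) (hd : Alternates w c d)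
    (h12 : x1 < x2) (h23 : x2 < x3) (hx1 : w[x1]? = some c) (hx2 : w[x2]? = some c)
    (hx3 : w[x3]? = some c) : False := by
  rcases hbc.lt_or_gt with hbc | hcb
  · obtain ⟨i, hi1, hi2, hi⟩ := ha.1 x1 x2 h12 hx1 hx2
    obtain ⟨j, hj1, hj2, hj⟩ := hb.1 x2 x3 h23 hx2 hx3
    exact hav ⟨i, j, x3, a, b, c, by omega, hj2, hi, hj, hx3, hab, hbc⟩
  · obtain ⟨i, hi1, hi2, hi⟩ := hb.1 x1 x2 h12 hx1 hx2
    obtain ⟨j, hj1, hj2, hj⟩ := hd.1 x2 x3 h23 hx2 hx3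
    exact hav ⟨x1, i, j, c, b, d, hi1, by omega, hx1, hi, hj, hcb, hbd⟩

theorem Avoids123.false_of_center_once (hav : Avoids123 w) (hl : StrictMono l)
    (halt : ∀ k, Alternates w c (l k)) (hnon : Pairwise fun k k' => ¬Alternates w (l k) (l k'))
    (hcc : ∀ m, w[m]? = some c → m = x0) : False := by
  obtain ⟨u, hu⟩ : ∃ u, ∀ k, k ≠ u → OccursTwice w (l k) := by
    by_contra! h
    obtain ⟨k, -, hk⟩ := h 0
    obtain ⟨k', hk'k, hk'⟩ := h k
    exact hnon hk'k (alternates_of_not_occursTwice hk' hk)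
  set e := l ∘ u.succAbove
  have he : StrictMono e := hl.comp (Fin.strictMono_succAbove u)
  have hstraddle : ∀ k, ∃ p s, p < x0 ∧ x0 < s ∧ w[p]? = some (e k) ∧ w[s]? = some (e k) := by
    intro k
    obtain ⟨i, j, hij, hi, hj⟩ := hu _ (Fin.succAbove_ne u k)
    exact ⟨i, j, (halt _).straddle_of_center_once hcc hi hj hij |>.1,
      (halt _).straddle_of_center_once hcc hi hj hij |>.2, hi, hj⟩
  choose p s hp hs hpe hse using hstraddle
  have hnested : ∀ k k' : Fin 5, k ≠ k' → p k < p k' → s k' < s k := fun k k' hkk' =>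
    nested_of_center_once hcc (halt _) (halt _) (he.injective.ne hkk')
      (hnon ((Fin.strictMono_succAbove u).injective.ne hkk')) (hp k) (hs k) (hp k') (hs k')
      (hpe k) (hse k) (hpe k') (hse k')
  rcases lt_trichotomy (p 1) (p 2) with h12 | h12 | h21
  · exact hav ⟨p 1, p 2, s 3, _, _, _, h12, (hp 2).trans (hs 3), hpe 1, hpe 2, hse 3,
      he (by decide), he (by decide)⟩
  · exact ne_of_getElem?_eq_some (hpe 1) (hpe 2) (he.injective.ne (by decide)) h12
  · exact hav ⟨p 0, s 1, s 2, _, _, _, (hp 0).trans (hs 1), hnested 2 1 (by decide) h21,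
      hpe 0, hse 1, hse 2, he (by decide), he (by decide)⟩

theorem Avoids123.center_lt_of_before_centers (hav : Avoids123 w) (hb : Alternates w c b)
    (hab : a < b) (hac : a ≠ c) (hbc : b ≠ c) (h12 : x1 < x2) (hx1 : w[x1]? = some c)
    (hx2 : w[x2]? = some c) (hp : p < x1) (hpa : w[p]? = some a) : c < a := by
  refine hac.lt_or_gt.resolve_left fun hac => ?_
  obtain ⟨g, hg1, hg2, hg⟩ := hb.1 x1 x2 h12 hx1 hx2
  rcases hbc.lt_or_gt with hbc | hcb
  · exact hav ⟨p, g, x2, _, _, _, hp.trans hg1, hg2, hpa, hg, hx2, hab, hbc⟩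
  · exact hav ⟨p, x1, g, _, _, _, hp, hg1, hpa, hx1, hg, hac, hcb⟩

theorem Avoids123.lt_center_of_after_centers (hav : Avoids123 w) (hb : Alternates w c b)
    (hba : b < a) (hac : a ≠ c) (hbc : b ≠ c) (h12 : x1 < x2) (hx1 : w[x1]? = some c)
    (hx2 : w[x2]? = some c) (hq : x2 < q) (hqa : w[q]? = some a) : a < c := by
  refine hac.lt_or_gt.resolve_right fun hca => ?_
  obtain ⟨g, hg1, hg2, hg⟩ := hb.1 x1 x2 h12 hx1 hx2
  rcases hbc.lt_or_gt with hbc | hcb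
  · exact hav ⟨g, x2, q, _, _, _, hg2, hq, hg, hx2, hqa, hbc, hca⟩
  · exact hav ⟨x1, g, q, _, _, _, hg1, hg2.trans hq, hx1, hg, hqa, hcb, hba⟩

theorem Avoids123.gap_lt_of_lt (hav : Avoids123 w) (hx1 : w[x1]? = some c)
    (hx2 : w[x2]? = some c) (hcc : ∀ m, w[m]? = some c → m = x1 ∨ m = x2)
    (ha : Alternates w c a) (hb : Alternates w c b) (hac : a ≠ c) (hbc : b ≠ c)
    (hab : a < b) (hnab : ¬Alternates w a b) (hga : w[ga]? = some a) (hgb : w[gb]? = some b)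
    (hga1 : x1 < ga) (hga2 : ga < x2) (hgb1 : x1 < gb) (hgb2 : gb < x2) : gb < ga := by
  refine (ne_of_getElem?_eq_some hgb hga hab.ne').lt_or_gt.resolve_right fun hlt => ?_
  rcases hbc.lt_or_gt with hbc | hcb
  · exact hav ⟨ga, gb, x2, _, _, _, hlt, hgb2, hga, hgb, hx2, hab, hbc⟩
  rcases hac.lt_or_gt with hac | hca
  · rcases pre_or_post_of_not_alternates hx1 hx2 hcc ha hb hac.ne hcb.ne' hab.ne hnab hga hgb
        hga1 hlt hgb2 with ⟨p, hp, hpa, -⟩ | ⟨q, hq, hqb, -⟩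
    · exact hav ⟨p, x1, gb, _, _, _, hp, hgb1, hpa, hx1, hgb, hac, hcb⟩
    · exact hav ⟨ga, x2, q, _, _, _, hga2, hq, hga, hx2, hqb, hac, hcb⟩
  · exact hav ⟨x1, ga, gb, _, _, _, hga1, hlt, hx1, hga, hgb, hca, hab⟩

theorem Avoids123.false_of_center_twice (hav : Avoids123 w) (hl : StrictMono l)
    (hlc : ∀ k, l k ≠ c) (halt : ∀ k, Alternates w c (l k))
    (hnon : Pairwise fun k k' => ¬Alternates w (l k) (l k')) (h12 : x1 < x2)
    (hx1 : w[x1]? = some c) (hx2 : w[x2]? = some c)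
    (hcc : ∀ m, w[m]? = some c → m = x1 ∨ m = x2) : False := by
  choose g hg1 hg2 hg using fun k => (halt k).1 x1 x2 h12 hx1 hx2
  have hbreak : ∀ k k', k < k' →
      (∃ p < x1, w[p]? = some (l k') ∧ ∀ p' < x1, w[p']? = some (l k) → p' < p) ∨
      (∃ q, x2 < q ∧ w[q]? = some (l k) ∧ ∀ q', x2 < q' → w[q']? = some (l k') → q < q') :=
    fun k k' hkk' => pre_or_post_of_not_alternates hx1 hx2 hcc (halt k') (halt k) (hlc k')
      (hlc k) (hl.injective.ne hkk'.ne') (hnon hkk'.ne') (hg k') (hg k) (hg1 k')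
      (hav.gap_lt_of_lt hx1 hx2 hcc (halt k) (halt k') (hlc k) (hlc k') (hl hkk')
        (hnon hkk'.ne) (hg k) (hg k') (hg1 k) (hg2 k) (hg1 k') (hg2 k')) (hg2 k)
  have hpre : ∀ k p, k ≠ 5 → p < x1 → w[p]? = some (l k) → c < l k := fun k p hk =>
    hav.center_lt_of_before_centers (halt 5) (hl (k.le_last.lt_of_ne hk)) (hlc k) (hlc 5) h12
      hx1 hx2
  have hpost : ∀ k q, k ≠ 0 → x2 < q → w[q]? = some (l k) → l k < c := fun k q hk =>
    hav.lt_center_of_after_centers (halt 0) (hl (Fin.pos_iff_ne_zero.2 hk)) (hlc k) (hlc 0)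
      h12 hx1 hx2
  rcases hbreak 2 3 (by decide) with ⟨p3, hp3, hp3w, -⟩ | ⟨q2, hq2, hq2w, -⟩
  · rcases hbreak 3 4 (by decide) with ⟨p4, hp4, hp4w, hbefore⟩ | ⟨q3, hq3, hq3w, -⟩
    · exact hav ⟨p3, p4, g 5, _, _, _, hbefore p3 hp3 hp3w, hp4.trans (hg1 5), hp3w, hp4w,
        hg 5, hl (by decide), hl (by decide)⟩
    · exact (hpre 3 p3 (by decide) hp3 hp3w).asymm (hpost 3 q3 (by decide) hq3 hq3w)
  · rcases hbreak 1 2 (by decide) with ⟨p2, hp2, hp2w, -⟩ | ⟨q1, hq1, hq1w, hafter⟩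
    · exact (hpre 2 p2 (by decide) hp2 hp2w).asymm (hpost 2 q2 (by decide) hq2 hq2w)
    · exact hav ⟨g 0, q1, q2, _, _, _, (hg2 0).trans hq1, hafter q2 hq2 hq2w, hg 0, hq1w,
        hq2w, hl (by decide), hl (by decide)⟩

theorem Avoids123.false_of_star (hav : Avoids123 w) (hl : StrictMono l) (hlc : ∀ k, l k ≠ c)
    (halt : ∀ k, Alternates w c (l k)) (hnon : Pairwise fun k k' => ¬Alternates w (l k) (l k'))
    (hc : c ∈ w) : False := by
  by_cases h3 : ∃ x1 x2 x3 : ℕ, x1 < x2 ∧ x2 < x3 ∧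
      w[x1]? = some c ∧ w[x2]? = some c ∧ w[x3]? = some c
  · obtain ⟨x1, x2, x3, h12, h23, hx1, hx2, hx3⟩ := h3
    exact hav.false_of_three_centers (hl (show (0 : Fin 6) < 1 by decide))
      (hl (show (1 : Fin 6) < 2 by decide)) (hlc 1) (halt 0) (halt 1) (halt 2) h12 h23 hx1 hx2 hx3
  by_cases h2 : ∃ x1 x2 : ℕ, x1 < x2 ∧ w[x1]? = some c ∧ w[x2]? = some c
  · obtain ⟨x1, x2, h12, hx1, hx2⟩ := h2
    refine hav.false_of_center_twice hl hlc halt hnon h12 hx1 hx2 fun m hm => ?_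
    by_contra! hne
    rcases Nat.lt_or_gt_of_ne hne.1 with hm1 | hm1 <;>
      rcases Nat.lt_or_gt_of_ne hne.2 with hm2 | hm2
    · exact h3 ⟨m, x1, x2, hm1, h12, hm, hx1, hx2⟩
    · omega
    · exact h3 ⟨x1, m, x2, hm1, hm2, hx1, hm, hx2⟩
    · exact h3 ⟨x1, x2, m, h12, hm2, hx1, hx2, hm⟩
  · obtain ⟨x0, hx0⟩ := List.mem_iff_getElem?.1 hc
    refine hav.false_of_center_once hl halt hnon (x0 := x0) fun m hm => ?_
    by_contra hne
    rcases Nat.lt_or_gt_of_ne hne with hm0 | hm0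
    · exact h2 ⟨m, x0, hm0, hm, hx0⟩
    · exact h2 ⟨x0, m, hm0, hx0, hm⟩

end PatternAvoidance

section Graphs

variable {V W L : Type*} {G : SimpleGraph V} {f : V → L} {w : List L}

lemma RepresentsLab.alternates_iff_adj (hw : RepresentsLab G f w) {H : SimpleGraph W}
    (φ : H ↪g G) {u v : W} (huv : u ≠ v) :
    Alternates w (f (φ u)) (f (φ v)) ↔ H.Adj u v :=
  (hw.2.2 _ _ (φ.injective.ne huv)).trans φ.map_adj_iff

lemma RepresentsLab.occursTwice_of_not_adj (hw : RepresentsLab G f w) {u v : V} (huv : u ≠ v)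
    (hadj : ¬G.Adj u v) : OccursTwice w (f u) ∨ OccursTwice w (f v) := by
  by_contra! h
  exact hadj ((hw.2.2 u v huv).1 (alternates_of_not_occursTwice h.1 h.2))

variable [LinearOrder L]

theorem RepresentsLab.not_avoids132_of_K4_embedding (hf : Injective f)
    (hw : RepresentsLab G f w) (ψ : (⊤ : SimpleGraph (Fin 4)) ↪g G)
    (htwice : ∀ k, OccursTwice w (f (ψ k))) : ¬Avoids132 w := by
  intro hav
  set σ := Tuple.sort (f ∘ ψ)
  refine hav.false_of_four_alternating (strictMono_comp_sort (hf.comp ψ.injective))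
    (fun k => htwice (σ k)) fun k k' hkk' => ?_
  exact (hw.alternates_iff_adj ψ (σ.injective.ne hkk')).2 (σ.injective.ne hkk')

theorem RepresentsLab.not_avoids132_of_twoK4_embedding (hf : Injective f)
    (hw : RepresentsLab G f w)
    (φ : (⊤ : SimpleGraph (Fin 4)) ⊕g (⊤ : SimpleGraph (Fin 4)) ↪g G) : ¬Avoids132 w := by
  by_cases h : ∀ k, OccursTwice w (f (φ (.inl k)))
  · exact hw.not_avoids132_of_K4_embedding hf (φ.comp Embedding.sumInl) h
  push Not at h
  obtain ⟨a, ha⟩ := h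
  refine hw.not_avoids132_of_K4_embedding hf (φ.comp Embedding.sumInr) fun b => ?_
  have hab : φ (.inl a) ≠ φ (.inr b) := φ.injective.ne Sum.inl_ne_inr
  refine (hw.occursTwice_of_not_adj hab ?_).resolve_left ha
  rw [φ.map_adj_iff]
  exact not_adj_sum_inl_inr a b

theorem RepresentsLab.not_avoids123_of_star_embedding (hf : Injective f)
    (hw : RepresentsLab G f w) (φ : completeBipartiteGraph (Fin 1) (Fin 6) ↪g G) :
    ¬Avoids123 w := by
  intro hav
  have hleaf : Injective (f ∘ φ ∘ Sum.inr) := hf.comp (φ.injective.comp Sum.inr_injective)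
  set σ := Tuple.sort (f ∘ φ ∘ Sum.inr)
  refine hav.false_of_star (c := f (φ (.inl 0))) (strictMono_comp_sort hleaf)
    (fun k => hf.ne (φ.injective.ne Sum.inr_ne_inl)) (fun k => ?_) (fun k k' hkk' => ?_)
    (hw.2.1 _)
  · exact (hw.alternates_iff_adj φ Sum.inl_ne_inr).2 (by simp)
  · change ¬Alternates w (f (φ (.inr (σ k)))) (f (φ (.inr (σ k'))))
    rw [hw.alternates_iff_adj φ (Sum.inr_injective.ne (σ.injective.ne hkk'))]
    simp

end Graphs

/-- there exists a finite graph that is neither 123-representable nor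
132-representable; in particular, the disjoint union of the star `K_{1,6}` and two copies of
`K_4` is neither 123-representable nor 132-representable (for every injective labeling of
its vertices by elements of a linearly ordered set, no 123-avoiding word and no 132-avoiding
word represents it). -/
theorem stmt_16 :
    (∃ (V : Type) (_ : Fintype V) (G : SimpleGraph V), ¬ Rep123 G ∧ ¬ Rep132 G) ∧
    (∀ (L : Type*) [LinearOrder L] (f : (Fin 1 ⊕ Fin 6) ⊕ (Fin 4 ⊕ Fin 4) → L),
        Function.Injective f →
        ¬ ∃ w : List L, Avoids123 w ∧ RepresentsLab starPlusTwoK4 f w) ∧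
    (∀ (L : Type*) [LinearOrder L] (f : (Fin 1 ⊕ Fin 6) ⊕ (Fin 4 ⊕ Fin 4) → L),
        Function.Injective f →
        ¬ ∃ w : List L, Avoids132 w ∧ RepresentsLab starPlusTwoK4 f w) := by
  refine ⟨⟨_, inferInstance, starPlusTwoK4, ?_, ?_⟩, ?_, ?_⟩
  · rintro ⟨L, _, f, hf, w, hav, hw⟩
    exact hw.not_avoids123_of_star_embedding hf Embedding.sumInl hav
  · rintro ⟨L, _, f, hf, w, hav, hw⟩
    exact hw.not_avoids132_of_twoK4_embedding hf Embedding.sumInr hav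
  · rintro L _ f hf ⟨w, hav, hw⟩
    exact hw.not_avoids123_of_star_embedding hf Embedding.sumInl hav
  · rintro L _ f hf ⟨w, hav, hw⟩
    exact hw.not_avoids132_of_twoK4_embedding hf Embedding.sumInr hav
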